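/- arXiv:1909.10103 — 8 statements merged into one kernel-verified Lean document; each statement's English description precedes it below -/
import Mathlib

section
/- A one-dimensional move ℓ is valid if and only if its profile ℓ̂ is nonnegative at every point of [1,∞] and ℓ̂(1) = 0. -/
open scoped BigOperators Classical

noncomputable section

/-- The profile `P_x` of a point `x ∈ ℝ≥0`, viewed as a function on `[1,∞]`
(the extended reals `EReal` model the interval with its point `∞ = ⊤`):
`P_x(α) = 1` for `α ∈ [1,2)`, `P_x(α) = (xα - x)/(x + α - 2)` for `α ∈ [2,∞)`,
and `P_x(∞) = x` (with the conventions `P_0(α) = 0` for `α ∈ [2,∞]`, which the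
formula also yields since division by zero is zero). -/
def Pfun (x : ℝ) (α : EReal) : ℝ :=
  if α = ⊤ then x
  else if α.toReal < 2 then 1
  else (x * α.toReal - x) / (x + α.toReal - 2)

/-- A one-dimensional move: a finitely supported function on `ℝ≥0`
(modeled as a function on `ℝ` vanishing on the negatives). -/
def IsMove1 (f : ℝ → ℝ) : Prop :=
  (Function.support f).Finite ∧ ∀ x : ℝ, x < 0 → f x = 0

/-- Validity of a one-dimensional move. -/
def IsValid1 (f : ℝ → ℝ) : Prop :=
  (∑ᶠ x, f x) = 0 ∧
  (∀ lam : ℝ, 0 < lam → 0 ≤ ∑ᶠ x, (x / (x + lam)) * f x) ∧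
  0 ≤ ∑ᶠ x, x * f x

/-- The profile of a one-dimensional move. -/
def prof1 (f : ℝ → ℝ) (α : EReal) : ℝ := ∑ᶠ x, f x * Pfun x α

/-- A two-dimensional move: a finitely supported function on `ℝ≥0 × ℝ≥0`. -/
def IsMove2 (q : ℝ × ℝ → ℝ) : Prop :=
  (Function.support q).Finite ∧ ∀ p : ℝ × ℝ, p.1 < 0 ∨ p.2 < 0 → q p = 0

/-- A two-dimensional move is horizontally valid if all of its rows are valid. -/
def HorizValid (q : ℝ × ℝ → ℝ) : Prop := ∀ y : ℝ, IsValid1 fun x => q (x, y)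

/-- A two-dimensional move is vertically valid if all of its columns are valid. -/
def VertValid (q : ℝ × ℝ → ℝ) : Prop := ∀ x : ℝ, IsValid1 fun y => q (x, y)

/-- The two-variable profile of a two-dimensional move. -/
def prof2 (q : ℝ × ℝ → ℝ) (α β : EReal) : ℝ :=
  ∑ᶠ p : ℝ × ℝ, q p * Pfun p.1 α * Pfun p.2 β

/-- The transpose move `qᵀ(x,y) = q(y,x)`. -/
def transpose (q : ℝ × ℝ → ℝ) : ℝ × ℝ → ℝ := fun p => q (p.2, p.1)

/-- `pt x y` is the indicator move `⟦x,y⟧`. -/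
def pt (x y : ℝ) : ℝ × ℝ → ℝ := fun p => if p = (x, y) then 1 else 0

/-- The move `t_τ = 2·⟦1,1⟧ - ⟦2-τ,0⟧ - ⟦0,2-τ⟧`. -/
def tMove (τ : ℝ) : ℝ × ℝ → ℝ :=
  fun p => 2 * pt 1 1 p - pt (2 - τ) 0 p - pt 0 (2 - τ) p

/-- `slice g b` is the move `g_b`: the part of `g` on the horizontal line `y = b`. -/
def hslice (g : ℝ × ℝ → ℝ) (b : ℝ) : ℝ × ℝ → ℝ := fun p => if p.2 = b then g p else 0

lemma term_eq_aux (f : ℝ → ℝ) (hxpos : ∀ x, f x ≠ 0 → 0 ≤ x) (t : ℝ) (ht : 2 < t) (x : ℝ) :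
    f x * ((x * t - x) / (x + t - 2)) = (t - 1) * ((x / (x + (t - 2))) * f x) := by
  by_cases hfx : f x = 0
  · simp [hfx]
  · have hx' : 0 ≤ x := hxpos x hfx
    rw [show x + t - 2 = x + (t - 2) by ring, show x * t - x = (t - 1) * x by ring,
      mul_div_assoc]
    ring

/-- A one-dimensional move is valid iff its profile is nonnegative on all of
`[1,∞]` and vanishes at `1`. -/
theorem stmt_0 (f : ℝ → ℝ) (hmove : IsMove1 f) :
    IsValid1 f ↔
      ((∀ α : EReal, ((1 : ℝ) : EReal) ≤ α → 0 ≤ prof1 f α) ∧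
        prof1 f ((1 : ℝ) : EReal) = 0) := by
  obtain ⟨hfin, hneg⟩ := hmove
  set s := hfin.toFinset with hs
  have hmem : ∀ x : ℝ, f x ≠ 0 → x ∈ s := fun x h => hfin.mem_toFinset.2 h
  have hsum : ∀ g : ℝ → ℝ, ∑ᶠ x, g x * f x = ∑ x ∈ s, g x * f x := by
    intro g
    apply finsum_eq_finset_sum_of_support_subset
    intro x hx
    simp only [Function.mem_support] at hx
    exact hmem x (fun h => hx (by simp [h]))
  have hsum' : ∀ g : ℝ → ℝ, ∑ᶠ x, f x * g x = ∑ x ∈ s, f x * g x := by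
    intro g
    rw [finsum_congr (fun x => mul_comm (f x) (g x)), hsum]
    exact Finset.sum_congr rfl fun x _ => mul_comm _ _
  have hxpos : ∀ x, f x ≠ 0 → 0 ≤ x := fun x h =>
    le_of_not_gt (fun hl => h (hneg x hl))
  have hftot : ∑ᶠ x, f x = ∑ x ∈ s, f x := finsum_eq_sum f hfin
  -- profile at 1
  have hP1 : prof1 f ((1 : ℝ) : EReal) = ∑ x ∈ s, f x := by
    rw [prof1]
    have : ∀ x : ℝ, Pfun x ((1 : ℝ) : EReal) = 1 := by
      intro x
      rw [Pfun, if_neg (EReal.coe_ne_top 1),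
        if_pos (by rw [EReal.toReal_coe]; norm_num)]
    rw [finsum_congr (fun x => by rw [this x])]
    simp only [mul_one]
    exact hftot
  -- profile at ⊤
  have hPtop : prof1 f ⊤ = ∑ x ∈ s, x * f x := by
    rw [prof1]
    have : ∀ x : ℝ, Pfun x ⊤ = x := fun x => by simp [Pfun]
    rw [finsum_congr (fun x => by rw [this x]), hsum' (fun x => x)]
    exact Finset.sum_congr rfl fun x _ => mul_comm _ _
  -- profile at a real t with 2 < t
  have hPt : ∀ t : ℝ, 2 < t →
      prof1 f ((t : ℝ) : EReal) = (t - 1) * ∑ x ∈ s, (x / (x + (t - 2))) * f x := by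
    intro t ht
    rw [prof1]
    have hnot : ¬ ((t : EReal).toReal < 2) := by
      rw [EReal.toReal_coe]; linarith
    have hPf : ∀ x : ℝ, Pfun x ((t : ℝ) : EReal) = (x * t - x) / (x + t - 2) := by
      intro x
      rw [Pfun, if_neg (EReal.coe_ne_top t), if_neg hnot, EReal.toReal_coe]
    rw [finsum_congr (fun x => by rw [hPf x]), hsum' (fun x => (x * t - x) / (x + t - 2))]
    rw [Finset.mul_sum]
    exact Finset.sum_congr rfl fun x _ => term_eq_aux f hxpos t ht x
  constructor
  · rintro ⟨h1, h2, h3⟩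
    rw [hftot] at h1
    have h2' : ∀ lam : ℝ, 0 < lam → 0 ≤ ∑ x ∈ s, (x / (x + lam)) * f x := by
      intro lam hl
      have := h2 lam hl
      rwa [hsum (fun x => x / (x + lam))] at this
    have h3' : 0 ≤ ∑ x ∈ s, x * f x := by
      rwa [hsum (fun x => x)] at h3
    -- the limiting λ → 0⁺ bound
    have hf0 : 0 ≤ ∑ x ∈ s, (if x = 0 then (0 : ℝ) else 1) * f x := by
      have htend : Filter.Tendsto (fun lam : ℝ => ∑ x ∈ s, (x / (x + lam)) * f x)
          (nhdsWithin 0 (Set.Ioi 0))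
          (nhds (∑ x ∈ s, (if x = 0 then (0 : ℝ) else 1) * f x)) := by
        apply tendsto_finset_sum
        intro x _
        by_cases hx0 : x = 0
        · subst hx0
          have h0 : (fun lam : ℝ => (0 : ℝ) / (0 + lam) * f 0) = fun _ => 0 := by
            funext lam; simp
          rw [h0]
          simpa using tendsto_const_nhds
        · by_cases hfx : f x = 0
          · simp only [hfx, mul_zero]
            exact tendsto_const_nhds
          · have hxp : 0 < x := lt_of_le_of_ne (hxpos x hfx) (Ne.symm hx0)
            have hc : ContinuousAt (fun lam : ℝ => x / (x + lam) * f x) 0 := by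
              apply ContinuousAt.mul _ continuousAt_const
              apply ContinuousAt.div continuousAt_const
              · exact (continuous_const.add continuous_id).continuousAt
              · simp only [add_zero]; exact ne_of_gt hxp
            have := hc.tendsto.mono_left
              (nhdsWithin_le_nhds : nhdsWithin (0 : ℝ) (Set.Ioi 0) ≤ nhds 0)
            simp only [add_zero, div_self (ne_of_gt hxp), one_mul] at this
            simpa [if_neg hx0] using this
      apply ge_of_tendsto htend
      filter_upwards [self_mem_nhdsWithin] with lam hl
      exact h2' lam hl
    constructor
    · intro α hα
      by_cases hT : α = ⊤
      · subst hT
        rw [hPtop]; exact h3'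
      · have hB : α ≠ ⊥ := by
          intro h; rw [h] at hα
          exact absurd (lt_of_lt_of_le (EReal.bot_lt_coe 1) hα) (lt_irrefl _)
        have hαt : α = ((α.toReal : ℝ) : EReal) := (EReal.coe_toReal hT hB).symm
        set t := α.toReal with hht
        have ht1 : (1 : ℝ) ≤ t := by
          rw [hαt] at hα
          exact_mod_cast hα
        by_cases ht2 : t < 2
        · have : prof1 f α = ∑ x ∈ s, f x := by
            rw [hαt, prof1]
            have hPf : ∀ x : ℝ, Pfun x ((t : ℝ) : EReal) = 1 := by
              intro x
              simp [Pfun, EReal.toReal_coe, ht2]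
            rw [finsum_congr (fun x => by rw [hPf x])]
            simp only [mul_one]
            exact hftot
          rw [this, h1]
        · push_neg at ht2
          rcases eq_or_lt_of_le ht2 with heq | hlt
          · -- t = 2
            have : prof1 f α = ∑ x ∈ s, (if x = 0 then (0 : ℝ) else 1) * f x := by
              rw [hαt, ← heq, prof1]
              have hnot : ¬ (((2 : ℝ) : EReal).toReal < 2) := by
                rw [EReal.toReal_coe]; linarith
              have hPf : ∀ x : ℝ, Pfun x (((2 : ℝ) : ℝ) : EReal)
                  = (if x = 0 then (0 : ℝ) else 1) := by
                intro x
                rw [Pfun, if_neg (EReal.coe_ne_top 2), if_neg hnot, EReal.toReal_coe]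
                by_cases hx0 : x = 0
                · simp [hx0]
                · rw [if_neg hx0, show x * 2 - x = x by ring, show x + 2 - 2 = x by ring,
                    div_self hx0]
              rw [finsum_congr (fun x => by rw [hPf x]),
                hsum' (fun x => if x = 0 then (0 : ℝ) else 1)]
              exact Finset.sum_congr rfl fun x _ => mul_comm _ _
            rw [this]; exact hf0
          · -- 2 < t
            rw [hαt, hPt t hlt]
            have := h2' (t - 2) (by linarith)
            have ht1' : (0 : ℝ) ≤ t - 1 := by linarith
            positivity
    · rw [hP1, h1]
  · rintro ⟨hpos, hzero⟩
    rw [hP1] at hzero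
    refine ⟨by rw [hftot, hzero], ?_, ?_⟩
    · intro lam hl
      have h2t : (2 : ℝ) < lam + 2 := by linarith
      have := hpos (((lam + 2 : ℝ) : ℝ) : EReal) (by exact_mod_cast (by linarith : (1:ℝ) ≤ lam + 2))
      rw [hPt (lam + 2) h2t] at this
      have hsimp : lam + 2 - 2 = lam := by ring
      rw [hsimp] at this
      have hpos1 : (0 : ℝ) < lam + 2 - 1 := by linarith
      have h' : 0 ≤ ∑ x ∈ s, x / (x + lam) * f x := by
        by_contra hc
        push_neg at hc
        nlinarith
      rwa [hsum (fun x => x / (x + lam))]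
    · have := hpos ⊤ le_top
      rw [hPtop] at this
      rwa [hsum (fun x => x)]
end
end

section
/- Let ℓ : ℝ≥0 → ℝ be a function with finite support such that ∑ₓ ℓ(x) = 0 and ∑ₓ (x/(x+λ))·ℓ(x) ≥ 0 for every λ > 0. Then ∑ₓ x·ℓ(x) ≥ 0. (Thus the third condition in the definition of a valid one-dimensional move is redundant, being implied by the first two.) -/
open scoped BigOperators Classical

noncomputable section

/-! Since `λ · x / (x + λ) → x` as `λ → ∞`, the sum `∑ x ℓ(x)` is the limit of the nonnegative
numbers `λ · ∑ (x / (x + λ)) ℓ(x)`. -/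

open Filter Topology

theorem tendsto_mul_div_add_atTop (x : ℝ) :
    Tendsto (fun lam : ℝ => lam * (x / (x + lam))) atTop (𝓝 x) := by
  have hvanish : Tendsto (fun lam : ℝ => x ^ 2 / (x + lam)) atTop (𝓝 0) :=
    tendsto_const_nhds.div_atTop (tendsto_atTop_add_const_left _ x tendsto_id)
  refine (sub_zero x ▸ hvanish.const_sub x).congr' ?_
  filter_upwards [eventually_gt_atTop (-x)] with lam hlam
  have : x + lam ≠ 0 := by linarith
  field_simp
  ring

theorem tendsto_finsum_mul_of_support_finite {α ι : Type*} {l : Filter α} {g : α → ι → ℝ}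
    {h f : ι → ℝ} (hf : f.support.Finite) (hg : ∀ i, Tendsto (g · i) l (𝓝 (h i))) :
    Tendsto (fun a => ∑ᶠ i, g a i * f i) l (𝓝 (∑ᶠ i, h i * f i)) := by
  have hsupp : ∀ k : ι → ℝ, (fun i => k i * f i).support ⊆ hf.toFinset := fun k =>
    (Function.support_mul_subset_right _ _).trans hf.coe_toFinset.ge
  simp only [finsum_eq_sum_of_support_subset _ (hsupp _)]
  exact tendsto_finsetSum _ fun i _ => (hg i).mul_const _

theorem stmt_2_general (f : ℝ → ℝ) (hmove : IsMove1 f)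
    (h2 : ∀ lam : ℝ, 0 < lam → 0 ≤ ∑ᶠ x, (x / (x + lam)) * f x) :
    0 ≤ ∑ᶠ x, x * f x := by
  have hlim : Tendsto (fun lam : ℝ => lam * ∑ᶠ x, (x / (x + lam)) * f x) atTop
      (𝓝 (∑ᶠ x, x * f x)) := by
    simp only [mul_finsum, ← mul_assoc]
    exact tendsto_finsum_mul_of_support_finite hmove.1 tendsto_mul_div_add_atTop
  refine ge_of_tendsto hlim ?_
  filter_upwards [eventually_gt_atTop 0] with lam hlam
  exact mul_nonneg hlam.le (h2 lam hlam)

/-- The third condition in the definition of a valid one-dimensional move is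
implied by the first two. -/
theorem stmt_2 (f : ℝ → ℝ) (hmove : IsMove1 f)
    (h1 : (∑ᶠ x, f x) = 0)
    (h2 : ∀ lam : ℝ, 0 < lam → 0 ≤ ∑ᶠ x, (x / (x + lam)) * f x) :
    0 ≤ ∑ᶠ x, x * f x :=
  stmt_2_general f hmove h2
end
end

section
/- If q is a two-dimensional move that is horizontally valid or vertically valid, then its profile satisfies q̂(α,β) ≥ 0 for all α, β ∈ [1,∞]. -/
open scoped BigOperators Classical

noncomputable section

/-!
For finite `α ≥ 2`, `P_x(α) = (α - 1) · x / (x + (α - 2))`, so the one-dimensional profile of a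
valid move is a nonnegative multiple of a validity sum `∑ x/(x+λ) ℓ(x)` with `λ = α - 2`; the case
`λ = 0` follows by letting `λ → 0⁺`. For `α < 2` the profile is `∑ ℓ = 0`, and at `∞` it is
`∑ x ℓ(x)`. The two-dimensional profile is `∑ₓ P_x(α) · (profile of column x)(β)` with
`P_x(α) ≥ 0`, and transposition exchanges rows and columns.
-/

lemma Pfun_nonneg {x : ℝ} (hx : 0 ≤ x) (α : EReal) : 0 ≤ Pfun x α := by
  unfold Pfun
  split_ifs with _ h2
  · exact hx
  · exact zero_le_one
  · exact div_nonneg (by nlinarith [not_lt.1 h2]) (by linarith [not_lt.1 h2])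

lemma Pfun_top (x : ℝ) : Pfun x ⊤ = x := if_pos rfl

lemma Pfun_of_toReal_lt_two {α : EReal} (hα : α ≠ ⊤) (h : α.toReal < 2) (x : ℝ) :
    Pfun x α = 1 := by
  simp [Pfun, hα, h]

lemma Pfun_of_two_le_toReal {α : EReal} (hα : α ≠ ⊤) (h : 2 ≤ α.toReal) (x : ℝ) :
    Pfun x α = (α.toReal - 1) * (x / (x + (α.toReal - 2))) := by
  simp only [Pfun, hα, if_false, not_lt.2 h]
  rw [mul_div_assoc', add_sub_assoc']
  ring_nf

-- The `x = 0` term vanishes for every `λ`, and the others are continuous at `λ = 0`.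
lemma continuousAt_finsum_div_add_mul {f : ℝ → ℝ} (hf : f.support.Finite) :
    ContinuousAt (fun lam => ∑ᶠ x, x / (x + lam) * f x) 0 := by
  have hsupp : ∀ lam : ℝ, (fun x => x / (x + lam) * f x).support ⊆ hf.toFinset := fun lam x hx =>
    hf.mem_toFinset.2 (right_ne_zero_of_mul hx)
  simp_rw [finsum_eq_sum_of_support_subset _ (hsupp _)]
  refine tendsto_finsetSum _ fun x _ => ?_
  rcases eq_or_ne x 0 with rfl | hx
  · simp
  · exact (continuousAt_const.div (by fun_prop) (by simpa using hx)).mul continuousAt_const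

lemma IsValid1.finsum_div_add_mul_nonneg {f : ℝ → ℝ} (hf : f.support.Finite) (hv : IsValid1 f)
    {lam : ℝ} (hlam : 0 ≤ lam) : 0 ≤ ∑ᶠ x, x / (x + lam) * f x := by
  rcases hlam.lt_or_eq with hlam | rfl
  · exact hv.2.1 lam hlam
  · exact ge_of_tendsto
      ((continuousAt_finsum_div_add_mul hf).tendsto.mono_left (nhdsWithin_le_nhds (s := Set.Ioi 0)))
      (eventually_nhdsWithin_of_forall hv.2.1)

lemma prof1_nonneg {f : ℝ → ℝ} (hf : f.support.Finite) (hv : IsValid1 f) (α : EReal) :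
    0 ≤ prof1 f α := by
  by_cases hα : α = ⊤
  · simpa [prof1, hα, Pfun_top, mul_comm] using hv.2.2
  rcases lt_or_ge α.toReal 2 with h | h
  · simp [prof1, Pfun_of_toReal_lt_two hα h, hv.1]
  · simp_rw [prof1, Pfun_of_two_le_toReal hα h, mul_comm (f _), mul_assoc, ← mul_finsum]
    exact mul_nonneg (by linarith) (hv.finsum_div_add_mul_nonneg hf (by linarith))

lemma prof2_eq_finsum_mul_prof1 {q : ℝ × ℝ → ℝ} (hq : q.support.Finite) (α β : EReal) :
    prof2 q α β = ∑ᶠ x, Pfun x α * prof1 (fun y => q (x, y)) β := by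
  rw [prof2, finsum_curry _ (hq.subset fun p hp => left_ne_zero_of_mul (left_ne_zero_of_mul hp))]
  refine finsum_congr fun x => ?_
  rw [prof1, mul_finsum]
  exact finsum_congr fun y => by ring

lemma IsMove2.transpose {q : ℝ × ℝ → ℝ} (h : IsMove2 q) : IsMove2 (transpose q) :=
  ⟨h.1.preimage Prod.swap_injective.injOn, fun p hp => h.2 p.swap hp.symm⟩

lemma prof2_transpose (q : ℝ × ℝ → ℝ) (α β : EReal) :
    prof2 (transpose q) β α = prof2 q α β := by
  rw [prof2, prof2, ← finsum_comp_equiv (Equiv.prodComm ℝ ℝ)]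
  refine finsum_congr fun p => ?_
  simp only [Equiv.prodComm_apply, Prod.fst_swap, Prod.snd_swap, transpose]
  ring

lemma prof2_nonneg_of_vertValid {q : ℝ × ℝ → ℝ} (hq : IsMove2 q) (hv : VertValid q)
    (α β : EReal) : 0 ≤ prof2 q α β := by
  rw [prof2_eq_finsum_mul_prof1 hq.1]
  refine finsum_nonneg fun x => ?_
  rcases lt_or_ge x 0 with hx | hx
  · simp [prof1, hq.2 (x, _) (Or.inl hx)]
  · exact mul_nonneg (Pfun_nonneg hx α)
      (prof1_nonneg (hq.1.preimage (Prod.mk_right_injective x).injOn) (hv x) β)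

/-- The profile of a horizontally or vertically valid move is nonnegative on
`[1,∞] × [1,∞]`. -/
theorem stmt_3 (q : ℝ × ℝ → ℝ) (hmove : IsMove2 q)
    (h : HorizValid q ∨ VertValid q) :
    ∀ α β : EReal, ((1 : ℝ) : EReal) ≤ α → ((1 : ℝ) : EReal) ≤ β →
      0 ≤ prof2 q α β := by
  intro α β _ _
  rcases h with hh | hv
  · rw [← prof2_transpose]
    exact prof2_nonneg_of_vertValid hmove.transpose hh β α
  · exact prof2_nonneg_of_vertValid hmove hv α β
end
end

section
/- If q is a horizontally valid two-dimensional move, then q̂(α,1) ≥ q̂(α,2) for every α ∈ [1,∞]. -/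
open scoped BigOperators Classical

noncomputable section

lemma key1 (f : ℝ → ℝ) (hm : IsMove1 f) (hv : IsValid1 f) (α : EReal)
    (hα : ((1:ℝ):EReal) ≤ α) : 0 ≤ ∑ᶠ x, f x * Pfun x α := by
  classical
  set S : Finset ℝ := hm.1.toFinset with hS
  have hmem : ∀ x, f x ≠ 0 → x ∈ S := by
    intro x hx; simp [hS, Set.Finite.mem_toFinset, Function.mem_support, hx]
  have hconv : ∀ g : ℝ → ℝ, (∑ᶠ x, f x * g x) = ∑ x ∈ S, f x * g x := by
    intro g
    refine finsum_eq_sum_of_support_subset _ ?_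
    intro x hx
    have : f x ≠ 0 := fun h => hx (by simp [Function.mem_support] at hx ⊢; simp [h] at hx)
    exact hmem x this
  have hconv' : ∀ g : ℝ → ℝ, (∑ᶠ x, g x * f x) = ∑ x ∈ S, g x * f x := by
    intro g
    refine finsum_eq_sum_of_support_subset _ ?_
    intro x hx
    have : f x ≠ 0 := by
      simp only [Function.mem_support] at hx
      intro h; exact hx (by simp [h])
    exact hmem x this
  induction α using EReal.rec with
  | bot => exact absurd hα (not_le.mpr (EReal.bot_lt_coe 1))
  | top =>
    have : (∑ᶠ x, f x * Pfun x ⊤) = ∑ᶠ x, x * f x := by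
      refine finsum_congr fun x => ?_
      simp [Pfun, mul_comm]
    rw [this]; exact hv.2.2
  | coe a =>
    have ha : (1:ℝ) ≤ a := by exact_mod_cast hα
    have hne : ((a:ℝ):EReal) ≠ ⊤ := EReal.coe_ne_top a
    have hta : ((a:ℝ):EReal).toReal = a := EReal.toReal_coe a
    by_cases h2 : a < 2
    · have : (∑ᶠ x, f x * Pfun x (a:EReal)) = ∑ᶠ x, f x := by
        refine finsum_congr fun x => ?_
        simp [Pfun, hne, hta, h2]
      rw [this, hv.1]
    · push_neg at h2
      rcases lt_or_eq_of_le h2 with hlt | heq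
      · -- a > 2
        set lam := a - 2 with hlam
        have hlam0 : 0 < lam := by simp [hlam]; linarith
        have hPf : ∀ x : ℝ, Pfun x (a:EReal) = (a - 1) * (x / (x + lam)) := by
          intro x
          simp only [Pfun, hne, if_false, hta]
          rw [if_neg (not_lt.mpr h2), hlam,
            show x * a - x = (a-1) * x by ring, show x + a - 2 = x + (a-2) by ring,
            mul_div_assoc]
        have h0 := hv.2.1 lam hlam0
        rw [hconv' (fun x => x / (x + lam))] at h0
        have : (∑ᶠ x, f x * Pfun x (a:EReal)) = (a-1) * ∑ x ∈ S, (x / (x + lam)) * f x := by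
          rw [hconv (fun x => Pfun x (a:EReal)), Finset.mul_sum]
          refine Finset.sum_congr rfl fun x _ => ?_
          rw [hPf x]; ring
        rw [this]
        exact mul_nonneg (by linarith) h0
      · -- a = 2
        subst heq
        have hPf : ∀ x : ℝ, Pfun x ((2:ℝ):EReal) = x / x := by
          intro x
          simp only [Pfun, hne, if_false, hta]
          rw [if_neg (lt_irrefl 2)]
          congr 1 <;> ring
        set g : ℝ → ℝ := fun lam => ∑ x ∈ S, (x / (x + lam)) * f x with hg
        have h1 : ∀ lam : ℝ, 0 < lam → 0 ≤ g lam := by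
          intro lam hlam
          have := hv.2.1 lam hlam
          rwa [hconv' (fun x => x / (x + lam))] at this
        have htend : Filter.Tendsto g (nhdsWithin 0 (Set.Ioi 0)) (nhds (g 0)) := by
          apply tendsto_finset_sum
          intro x hx
          rcases eq_or_ne x 0 with rfl | hx0
          · simpa using tendsto_const_nhds
          · have hxS : f x ≠ 0 := by simpa [hS, Function.mem_support] using hx
            have hxpos : 0 < x := by
              rcases lt_or_ge x 0 with h | h
              · exact absurd (hm.2 x h) hxS
              · exact lt_of_le_of_ne h (Ne.symm hx0)
            have : ContinuousAt (fun lam : ℝ => x / (x + lam) * f x) 0 := by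
              apply ContinuousAt.mul _ continuousAt_const
              exact ContinuousAt.div continuousAt_const
                (continuousAt_const.add continuousAt_id) (by simpa using ne_of_gt hxpos)
            exact this.continuousWithinAt.tendsto
        have h0 : 0 ≤ g 0 :=
          ge_of_tendsto htend (Filter.eventually_of_mem self_mem_nhdsWithin
            fun lam hlam => h1 lam hlam)
        have : (∑ᶠ x, f x * Pfun x ((2:ℝ):EReal)) = g 0 := by
          rw [hconv (fun x => Pfun x ((2:ℝ):EReal)), hg]
          refine Finset.sum_congr rfl fun x _ => ?_
          rw [hPf x, add_zero, mul_comm]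
        rw [this]; exact h0

/-- For a horizontally valid move `q`, `q̂(α,1) ≥ q̂(α,2)` for all `α ∈ [1,∞]`. -/
theorem stmt_5 (q : ℝ × ℝ → ℝ) (hmove : IsMove2 q) (hval : HorizValid q) :
    ∀ α : EReal, ((1 : ℝ) : EReal) ≤ α →
      prof2 q α ((2 : ℝ) : EReal) ≤ prof2 q α ((1 : ℝ) : EReal) := by
  intro α hα
  classical
  set T : Finset (ℝ × ℝ) := hmove.1.toFinset with hT
  have hTmem : ∀ p : ℝ × ℝ, q p ≠ 0 → p ∈ T := by
    intro p hp; simp [hT, Set.Finite.mem_toFinset, Function.mem_support, hp]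
  have hconv2 : ∀ β : EReal, prof2 q α β = ∑ p ∈ T, q p * Pfun p.1 α * Pfun p.2 β := by
    intro β
    refine finsum_eq_sum_of_support_subset _ ?_
    intro p hp
    refine hTmem p fun h => ?_
    simp only [Function.mem_support, h] at hp
    exact hp (by ring)
  set f : ℝ → ℝ := fun x => q (x, 0) with hf
  have hmf : IsMove1 f := by
    constructor
    · have : Function.support f ⊆ (fun x : ℝ => (x, (0:ℝ))) ⁻¹' Function.support q := by
        intro x hx; exact hx
      have hinj : Function.Injective (fun x : ℝ => (x, (0:ℝ))) :=
        fun a b h => congrArg Prod.fst h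
      exact Set.Finite.subset (hmove.1.preimage hinj.injOn) this
    · intro x hx; exact hmove.2 (x, 0) (Or.inl hx)
  have hD := key1 f hmf (hval 0) α hα
  set F : Finset (ℝ × ℝ) := T.filter (fun p => p.2 = 0) with hF
  have hDeq : (∑ᶠ x, f x * Pfun x α) = ∑ p ∈ F, q p * Pfun p.1 α := by
    rw [finsum_eq_sum_of_support_subset _
      (show Function.support (fun x => f x * Pfun x α) ⊆ ↑(F.image Prod.fst) by
        intro x hx
        have hfx : f x ≠ 0 := by
          simp only [Function.mem_support] at hx
          intro h; exact hx (by simp [h])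
        simp only [Finset.coe_image, Set.mem_image, Finset.mem_coe, hF, Finset.mem_filter]
        exact ⟨(x, 0), ⟨hTmem _ hfx, rfl⟩, rfl⟩)]
    rw [Finset.sum_image]
    · refine Finset.sum_congr rfl fun p hp => ?_
      have hp2 : p.2 = 0 := by simp [hF] at hp; exact hp.2
      have : q (p.1, 0) = q p := by rw [← hp2]
      simp [hf, this]
    · intro p hp p' hp' h
      have hp2 : p.2 = 0 := by simp [hF] at hp; exact hp.2
      have hp2' : p'.2 = 0 := by simp [hF] at hp'; exact hp'.2
      exact Prod.ext h (hp2.trans hp2'.symm)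
  have hP1 : ∀ y : ℝ, Pfun y ((1:ℝ):EReal) = 1 := by
    intro y
    rw [Pfun, if_neg (EReal.coe_ne_top 1), EReal.toReal_coe, if_pos (by norm_num)]
  have hP2 : ∀ y : ℝ, Pfun y ((2:ℝ):EReal) = if y = 0 then 0 else 1 := by
    intro y
    rw [Pfun, if_neg (EReal.coe_ne_top 2), EReal.toReal_coe, if_neg (lt_irrefl 2)]
    rcases eq_or_ne y 0 with rfl | hy
    · norm_num
    · rw [if_neg hy, show y * 2 - y = y by ring, show y + 2 - 2 = y by ring, div_self hy]
  have hdiff : prof2 q α ((1:ℝ):EReal) - prof2 q α ((2:ℝ):EReal)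
      = ∑ p ∈ F, q p * Pfun p.1 α := by
    rw [hconv2, hconv2, ← Finset.sum_sub_distrib, hF, Finset.sum_filter]
    refine Finset.sum_congr rfl fun p _ => ?_
    rw [hP1, hP2]
    rcases eq_or_ne p.2 0 with h | h
    · rw [if_pos h, if_pos h]; ring
    · rw [if_neg h, if_neg h]; ring
  rw [hDeq] at hD
  linarith [hD, hdiff]
end
end

section
/- Suppose τ ∈ (0,1) and g is a horizontally valid two-dimensional move with g + gᵀ = t_τ. Then ĝ(α,1) = 2 − P_{2−τ}(α) for every α ∈ [2,∞]. -/
open scoped BigOperators Classical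

noncomputable section

/-- If `g` is horizontally valid and `g + gᵀ = t_τ`, then
`ĝ(α,1) = 2 - P_{2-τ}(α)` for all `α ∈ [2,∞]`. -/
theorem stmt_8 (τ : ℝ) (hτ : τ ∈ Set.Ioo (0 : ℝ) 1)
    (g : ℝ × ℝ → ℝ) (hmove : IsMove2 g) (hval : HorizValid g)
    (hsum : ∀ p, g p + transpose g p = tMove τ p) :
    ∀ α : EReal, ((2 : ℝ) : EReal) ≤ α →
      prof2 g α ((1 : ℝ) : EReal) = 2 - Pfun (2 - τ) α := by
  intro α hα
  classical
  -- basic Pfun facts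
  have hαR : α ≠ ⊤ → 2 ≤ α.toReal := by
    intro hne
    have h := EReal.toReal_le_toReal hα (by simp) hne
    simpa using h
  have hPx1 : ∀ x : ℝ, Pfun x ((1 : ℝ) : EReal) = 1 := by
    intro x
    unfold Pfun
    rw [if_neg (by exact_mod_cast EReal.coe_ne_top (1 : ℝ)), if_pos (by norm_num [EReal.toReal_one])]
  have hP1 : Pfun 1 α = 1 := by
    unfold Pfun
    split_ifs with h1 h2
    · norm_num
    · rfl
    · have ht := hαR h1
      have hne : α.toReal - 1 ≠ 0 := by linarith
      rw [one_mul, show (1 : ℝ) + α.toReal - 2 = α.toReal - 1 by ring]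
      exact div_self hne
  have hP0 : Pfun 0 α = 0 := by
    unfold Pfun
    split_ifs with h1 h2
    · rfl
    · exact absurd (hαR h1) (by linarith)
    · simp
  set S : Finset (ℝ × ℝ) := hmove.1.toFinset with hS
  set A : Finset ℝ := ((S.image Prod.fst ∪ S.image Prod.snd) ∪ {1, 2 - τ, 0}) with hA
  have hmemS : ∀ p : ℝ × ℝ, g p ≠ 0 → p ∈ S := by
    intro p hp; simpa [hS, Set.Finite.mem_toFinset] using hp
  have hfstA : ∀ p : ℝ × ℝ, p ∈ S → p.1 ∈ A := by
    intro p hp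
    simp only [hA, Finset.mem_union]
    exact Or.inl (Or.inl (Finset.mem_image.2 ⟨p, hp, rfl⟩))
  have hsndA : ∀ p : ℝ × ℝ, p ∈ S → p.2 ∈ A := by
    intro p hp
    simp only [hA, Finset.mem_union]
    exact Or.inl (Or.inr (Finset.mem_image.2 ⟨p, hp, rfl⟩))
  have h1A : (1 : ℝ) ∈ A := by simp [hA]
  have h0A : (0 : ℝ) ∈ A := by simp [hA]
  have hτA : (2 - τ : ℝ) ∈ A := by simp [hA]
  have hgAA : ∀ p : ℝ × ℝ, g p ≠ 0 → p ∈ A ×ˢ A := by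
    intro p hp
    exact Finset.mem_product.2 ⟨hfstA p (hmemS p hp), hsndA p (hmemS p hp)⟩
  -- step 1: profile as a finite sum
  have e1 : prof2 g α ((1 : ℝ) : EReal) = ∑ p ∈ A ×ˢ A, g p * Pfun p.1 α := by
    rw [prof2, finsum_eq_finset_sum_of_support_subset]
    · exact Finset.sum_congr rfl fun p _ => by rw [hPx1, mul_one]
    · intro p hp
      have hgp : g p ≠ 0 := by
        intro h; apply hp; simp [Function.mem_support, h]
      exact hgAA p hgp
  -- step 2: transpose contributes zero
  have hrow : ∀ x : ℝ, ∑ y ∈ A, g (y, x) = 0 := by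
    intro x
    have h := (hval x).1
    rw [finsum_eq_finset_sum_of_support_subset (fun t => g (t, x)) (s := A)] at h
    · exact h
    · intro t ht
      have : g (t, x) ≠ 0 := ht
      exact hfstA (t, x) (hmemS _ this)
  have e2 : ∑ p ∈ A ×ˢ A, transpose g p * Pfun p.1 α = 0 := by
    rw [Finset.sum_product]
    have : ∀ x ∈ A, ∑ y ∈ A, transpose g (x, y) * Pfun x α = 0 := by
      intro x _
      have : ∑ y ∈ A, transpose g (x, y) * Pfun x α
          = (∑ y ∈ A, g (y, x)) * Pfun x α := by
        rw [Finset.sum_mul]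
        exact Finset.sum_congr rfl fun y _ => rfl
      rw [this, hrow, zero_mul]
    exact Finset.sum_eq_zero this
  -- step 3: the t-move sum
  have hpt : ∀ a b : ℝ, (a, b) ∈ A ×ˢ A →
      ∑ p ∈ A ×ˢ A, pt a b p * Pfun p.1 α = Pfun a α := by
    intro a b hab
    rw [Finset.sum_eq_single (a, b)]
    · simp [pt]
    · intro p _ hne; simp [pt, hne]
    · intro h; exact absurd hab h
  have e3 : ∑ p ∈ A ×ˢ A, tMove τ p * Pfun p.1 α = 2 - Pfun (2 - τ) α := by
    have expand : ∀ p : ℝ × ℝ, tMove τ p * Pfun p.1 α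
        = 2 * (pt 1 1 p * Pfun p.1 α) - pt (2 - τ) 0 p * Pfun p.1 α
          - pt 0 (2 - τ) p * Pfun p.1 α := by
      intro p; unfold tMove; ring
    rw [Finset.sum_congr rfl fun p _ => expand p]
    rw [Finset.sum_sub_distrib, Finset.sum_sub_distrib, ← Finset.mul_sum]
    rw [hpt 1 1 (Finset.mem_product.2 ⟨h1A, h1A⟩),
        hpt (2 - τ) 0 (Finset.mem_product.2 ⟨hτA, h0A⟩),
        hpt 0 (2 - τ) (Finset.mem_product.2 ⟨h0A, hτA⟩), hP1, hP0]
    ring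
  -- combine
  have key : ∑ p ∈ A ×ˢ A, g p * Pfun p.1 α + ∑ p ∈ A ×ˢ A, transpose g p * Pfun p.1 α
      = ∑ p ∈ A ×ˢ A, tMove τ p * Pfun p.1 α := by
    rw [← Finset.sum_add_distrib]
    exact Finset.sum_congr rfl fun p _ => by rw [← add_mul, hsum]
  rw [e1]
  rw [e2, add_zero, e3] at key
  exact key
end
end

section
/- Let δ > 0 and let X be a positive real-valued random variable satisfying E[X] ≤ 1 and E[1/X] ≤ 1 + δ. Then P(|X − 1| < (3/2)·δ + √(3δ + (9/4)·δ²)) ≥ 2/3. In particular, there is a universal constant K > 0 such that for all δ that arise, P(|X − 1| < K·√δ) ≥ 2/3 when δ ≤ 1. -/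
open MeasureTheory

/-!
The random variable `Y = X + 1/X - 2 = (X - 1)² / X` is nonnegative with `E[Y] ≤ δ`, so by
Markov's inequality `Y < 3δ` with probability at least `2/3`. On that event
`(X - 1)² < 3δ (1 + (X - 1))`, a quadratic inequality in `X - 1` whose positive root is
`(3/2)δ + √(3δ + (9/4)δ²)`; for `δ ≤ 1` this root is at most `5√δ`.
-/

theorem one_sub_integral_div_le_probReal_lt {Ω : Type*} [MeasurableSpace Ω] {μ : Measure Ω}
    [IsProbabilityMeasure μ] {Y : Ω → ℝ} (hY : 0 ≤ᵐ[μ] Y) (hYi : Integrable Y μ) {c : ℝ}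
    (hc : 0 < c) : 1 - (∫ ω, Y ω ∂μ) / c ≤ μ.real {ω | Y ω < c} := by
  have hcompl : {ω | Y ω < c} = {ω | c ≤ Y ω}ᶜ := by ext; simp
  have hmeas : NullMeasurableSet {ω | c ≤ Y ω} μ :=
    hYi.aemeasurable.nullMeasurable measurableSet_Ici
  rw [hcompl, probReal_compl_eq_one_sub₀ hmeas,
    sub_le_sub_iff_left, le_div_iff₀ hc, mul_comm]
  exact mul_meas_ge_le_integral_of_nonneg hY hYi c

theorem add_inv_sub_two_eq {x : ℝ} (hx : x ≠ 0) : x + x⁻¹ - 2 = (x - 1) ^ 2 / x := by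
  field_simp
  ring

theorem add_inv_sub_two_nonneg {x : ℝ} (hx : 0 < x) : 0 ≤ x + x⁻¹ - 2 := by
  rw [add_inv_sub_two_eq hx.ne']
  positivity

theorem abs_sub_one_lt_of_add_inv_sub_two_lt {x c : ℝ} (hx : 0 < x) (hc : 0 ≤ c)
    (h : x + x⁻¹ - 2 < c) : |x - 1| < c / 2 + √(c + c ^ 2 / 4) := by
  rw [add_inv_sub_two_eq hx.ne', div_lt_iff₀ hx] at h
  have hsq : (x - 1 - c / 2) ^ 2 < c + c ^ 2 / 4 := by linarith
  have hroot : |x - 1 - c / 2| < √(c + c ^ 2 / 4) :=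
    Real.lt_sqrt_of_sq_lt (by rwa [sq_abs])
  calc |x - 1| ≤ |x - 1 - c / 2| + c / 2 := by
        simpa [abs_of_nonneg (by positivity : 0 ≤ c / 2)] using abs_sub_le (x - 1) (c / 2) 0
    _ < c / 2 + √(c + c ^ 2 / 4) := by linarith

theorem add_sqrt_le_five_mul_sqrt {δ : ℝ} (h0 : 0 ≤ δ) (h1 : δ ≤ 1) :
    3 / 2 * δ + √(3 * δ + 9 / 4 * δ ^ 2) ≤ 5 * √δ := by
  have hδ : δ ≤ √δ := Real.le_sqrt_of_sq_le (by nlinarith)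
  have hroot : √(3 * δ + 9 / 4 * δ ^ 2) ≤ √(3 ^ 2 * δ) :=
    Real.sqrt_le_sqrt (by nlinarith)
  rw [Real.sqrt_mul (by norm_num), Real.sqrt_sq (by norm_num)] at hroot
  linarith

/-- If `X` is a positive random variable with `E[X] ≤ 1` and `E[1/X] ≤ 1 + δ`,
then `|X - 1| < (3/2)δ + √(3δ + (9/4)δ²)` with probability at least `2/3`; in
particular there is a universal constant `K > 0` such that, whenever `δ ≤ 1`,
`|X - 1| < K·√δ` with probability at least `2/3`. -/
theorem stmt_11 :
    ∃ K : ℝ, 0 < K ∧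
      ∀ (Ω : Type) [MeasurableSpace Ω] (μ : Measure Ω) [IsProbabilityMeasure μ]
        (X : Ω → ℝ) (δ : ℝ),
        (∀ ω, 0 < X ω) → 0 < δ →
        Integrable X μ → Integrable (fun ω => (X ω)⁻¹) μ →
        (∫ ω, X ω ∂μ) ≤ 1 → (∫ ω, (X ω)⁻¹ ∂μ) ≤ 1 + δ →
        ((2 / 3 : ℝ) ≤
            (μ {ω | |X ω - 1| < (3 / 2) * δ + Real.sqrt (3 * δ + (9 / 4) * δ ^ 2)}).toReal) ∧
        (δ ≤ 1 →
          (2 / 3 : ℝ) ≤ (μ {ω | |X ω - 1| < K * Real.sqrt δ}).toReal) := by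
  refine ⟨5, by norm_num, fun Ω _ μ _ X δ hX hδ hXi hXinvi hEX hEXinv => ?_⟩
  have hsum : Integrable (fun ω => X ω + (X ω)⁻¹) μ := hXi.add hXinvi
  have hYi : Integrable (fun ω => X ω + (X ω)⁻¹ - 2) μ := hsum.sub (integrable_const 2)
  have hEY : ∫ ω, (X ω + (X ω)⁻¹ - 2) ∂μ ≤ δ := by
    rw [integral_sub hsum (integrable_const 2), integral_add hXi hXinvi,
      integral_const, probReal_univ, one_smul]
    linarith
  have hmarkov : 2 / 3 ≤ μ.real {ω | X ω + (X ω)⁻¹ - 2 < 3 * δ} := by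
    calc (2 / 3 : ℝ) ≤ 1 - δ / (3 * δ) := by field_simp; norm_num
      _ ≤ 1 - (∫ ω, (X ω + (X ω)⁻¹ - 2) ∂μ) / (3 * δ) := by gcongr
      _ ≤ _ := one_sub_integral_div_le_probReal_lt
          (ae_of_all _ fun ω => add_inv_sub_two_nonneg (hX ω)) hYi (by positivity)
  have hmain : 2 / 3 ≤ μ.real {ω | |X ω - 1| < 3 / 2 * δ + √(3 * δ + 9 / 4 * δ ^ 2)} := by
    refine hmarkov.trans (measureReal_mono fun ω hω => ?_)
    have h := abs_sub_one_lt_of_add_inv_sub_two_lt (hX ω) (by positivity : 0 ≤ 3 * δ) hω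
    rwa [show 3 * δ / 2 = 3 / 2 * δ by ring, show (3 * δ) ^ 2 / 4 = 9 / 4 * δ ^ 2 by ring] at h
  exact ⟨hmain, fun hδ1 => hmain.trans (measureReal_mono fun ω hω =>
    hω.trans_le (add_sqrt_le_five_mul_sqrt hδ.le hδ1))⟩
end

section
/- Let f be an analytic function on an open neighborhood of the closed unit disc such that f has no zeroes on the unit circle and f(0) ≠ 0. Then ln|f(0)| ≤ (1/2π)·∫₀^{2π} ln|f(e^{it})| dt. -/
/-! Jensen's formula writes the circle average of `log ‖f‖` as `log ‖f c‖` plus, for each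
zero `u` in the disc, its multiplicity times `log (R / ‖c - u‖)`, which is nonnegative because
`‖c - u‖ ≤ R`. -/

open Metric Real Complex MeromorphicOn

theorem AnalyticOnNhd.log_norm_le_circleAverage {c : ℂ} {R : ℝ} {f : ℂ → ℂ} (hR : R ≠ 0)
    (hf : AnalyticOnNhd ℂ f (closedBall c |R|)) (hfc : f c ≠ 0) :
    Real.log ‖f c‖ ≤ circleAverage (Real.log ‖f ·‖) c R := by
  rw [hf.circleAverage_log_norm hR hfc, le_add_iff_nonneg_left]
  refine finsum_nonneg fun u ↦ ?_
  by_cases hu : u ∈ closedBall c |R|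
  · refine mul_nonneg (mod_cast hf.divisor_nonneg u) ?_
    rw [← Real.log_abs, abs_mul, abs_inv, abs_norm]
    rcases eq_or_ne u c with rfl | huc
    · simp
    · have hcu : 0 < ‖c - u‖ := norm_pos_iff.mpr (sub_ne_zero.mpr huc.symm)
      rw [← div_eq_mul_inv]
      exact Real.log_nonneg ((one_le_div hcu).mpr (by rwa [← dist_eq_norm, dist_comm]))
  · simp [Function.locallyFinsuppWithin.apply_eq_zero_of_notMem _ hu]

theorem circleAverage_zero_one_eq_integral (g : ℂ → ℝ) :
    circleAverage g 0 1 = 1 / (2 * π) * ∫ t in (0 : ℝ)..2 * π, g (exp (t * I)) := by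
  simp [circleAverage_def, circleMap_zero]

theorem stmt_13_general (f : ℂ → ℂ) (U : Set ℂ) (hU : IsOpen U)
    (hsub : Metric.closedBall (0 : ℂ) 1 ⊆ U)
    (hanal : DifferentiableOn ℂ f U)
    (h0 : f 0 ≠ 0) :
    Real.log (‖f 0‖) ≤
      (1 / (2 * Real.pi)) * ∫ t in (0 : ℝ)..(2 * Real.pi),
        Real.log (‖f (Complex.exp (t * Complex.I))‖) := by
  have hf : AnalyticOnNhd ℂ f (closedBall 0 |1|) := by
    simpa using (hanal.analyticOnNhd hU).mono hsub
  simpa [circleAverage_zero_one_eq_integral] using hf.log_norm_le_circleAverage one_ne_zero h0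

/-- If `f` is analytic on an open neighborhood of the closed unit disc, has no
zeroes on the unit circle, and `f 0 ≠ 0`, then
`ln |f 0| ≤ (1/2π) ∫₀^{2π} ln |f(e^{it})| dt`. -/
theorem stmt_13 (f : ℂ → ℂ) (U : Set ℂ) (hU : IsOpen U)
    (hsub : Metric.closedBall (0 : ℂ) 1 ⊆ U)
    (hanal : DifferentiableOn ℂ f U)
    (hne : ∀ z ∈ Metric.sphere (0 : ℂ) 1, f z ≠ 0)
    (h0 : f 0 ≠ 0) :
    Real.log (‖f 0‖) ≤
      (1 / (2 * Real.pi)) * ∫ t in (0 : ℝ)..(2 * Real.pi),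
        Real.log (‖f (Complex.exp (t * Complex.I))‖) :=
  stmt_13_general f U hU hsub hanal h0
end

section
/- Suppose τ ∈ (0,1) and g is a horizontally valid two-dimensional move with g + gᵀ = t_τ. Let r > 0 be such that for every a ∈ [3,5], ∑_{b : |b − a| < r} ĝ_b(a,a) ≥ 2/3, and define the move 𝐠 = ∑_{b : |b − 4| < r} g_b. Then for every a ∈ [3,5] with |a − 4| ≥ 2r, the profile of 𝐠 satisfies 𝐠̂(a,a) ≤ 1/3. -/
open scoped BigOperators Classical

noncomputable section

/-- If the slices of `g` within distance `r` of `a` contribute at least `2/3`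
to `ĝ(a,a)` for every `a ∈ [3,5]`, then the move `𝐠 = ∑_{|b-4| < r} g_b`
satisfies `𝐠̂(a,a) ≤ 1/3` for every `a ∈ [3,5]` with `|a - 4| ≥ 2r`. -/
theorem stmt_17 (τ : ℝ) (hτ : τ ∈ Set.Ioo (0 : ℝ) 1)
    (g : ℝ × ℝ → ℝ) (hmove : IsMove2 g) (hval : HorizValid g)
    (hsum : ∀ p, g p + transpose g p = tMove τ p)
    (r : ℝ) (hr : 0 < r)
    (hiso : ∀ a : ℝ, 3 ≤ a → a ≤ 5 →
      (2 / 3 : ℝ) ≤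
        ∑ᶠ b ∈ {b : ℝ | |b - a| < r},
          prof2 (hslice g b) ((a : ℝ) : EReal) ((a : ℝ) : EReal)) :
    ∀ a : ℝ, 3 ≤ a → a ≤ 5 → 2 * r ≤ |a - 4| →
      prof2 (fun p => if |p.2 - 4| < r then g p else 0)
          ((a : ℝ) : EReal) ((a : ℝ) : EReal) ≤ 1 / 3 := by
  obtain ⟨hτ0, hτ1⟩ := hτ
  intro a ha3 ha5 har
  classical
  have hS : (Function.support g).Finite := hmove.1
  set A : EReal := ((a : ℝ) : EReal) with hA
  set pa : ℝ → ℝ := fun x => (x * a - x) / (x + a - 2) with hpa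
  have hPA : ∀ x : ℝ, Pfun x A = pa x := by
    intro x
    simp only [Pfun, hA]
    rw [if_neg (EReal.coe_ne_top a), EReal.toReal_coe, if_neg (by linarith)]
  have hpa0 : pa 0 = 0 := by simp [hpa]
  have hpa1 : pa 1 = 1 := by
    simp only [hpa]
    rw [show (1:ℝ) * a - 1 = 1 + a - 2 by ring, div_self (by linarith)]
  have hpan : ∀ x : ℝ, 0 ≤ x → 0 ≤ pa x := by
    intro x hx
    apply div_nonneg
    · nlinarith
    · linarith
  have hpalin : ∀ x : ℝ, pa x = (a - 1) * (x / (x + (a - 2))) := by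
    intro x
    simp only [hpa]
    rw [← mul_div_assoc]
    ring_nf
  set S : Finset (ℝ × ℝ) := hS.toFinset with hSdef
  have hgS : ∀ p, p ∉ S → g p = 0 := by
    intro p hp
    by_contra h
    exact hp (hS.mem_toFinset.2 h)
  have hmemS : ∀ p, g p ≠ 0 → p ∈ S := fun p h => hS.mem_toFinset.2 h
  set X : Finset ℝ := S.image Prod.fst with hXdef
  set Y : Finset ℝ := S.image Prod.snd with hYdef
  have hmemX : ∀ p : ℝ × ℝ, g p ≠ 0 → p.1 ∈ X :=
    fun p h => Finset.mem_image.2 ⟨p, hmemS p h, rfl⟩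
  have hmemY : ∀ p : ℝ × ℝ, g p ≠ 0 → p.2 ∈ Y :=
    fun p h => Finset.mem_image.2 ⟨p, hmemS p h, rfl⟩
  -- generic reduction of prof2 to a finset sum
  have key : ∀ (q : ℝ × ℝ → ℝ) (U : Finset (ℝ × ℝ)), (∀ p, q p ≠ 0 → p ∈ U) →
      prof2 q A A = ∑ p ∈ U, q p * pa p.1 * pa p.2 := by
    intro q U hU
    unfold prof2
    have h1 : ∀ p : ℝ × ℝ, q p * Pfun p.1 A * Pfun p.2 A = q p * pa p.1 * pa p.2 :=
      fun p => by rw [hPA, hPA]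
    rw [finsum_congr h1]
    refine finsum_eq_sum_of_support_subset _ fun p hp => ?_
    refine hU p fun hq => ?_
    simp only [Function.mem_support, hq, zero_mul] at hp
    exact hp rfl
  set s : ℝ → ℝ := fun b => prof2 (hslice g b) A A with hsdef
  have hs_eq : ∀ b : ℝ, s b = ∑ x ∈ X, g (x, b) * pa x * pa b := by
    intro b
    have hinj : Set.InjOn (fun x : ℝ => (x, b)) X := fun x _ y _ h => congrArg Prod.fst h
    have := key (hslice g b) (X.image fun x => (x, b)) (by
      intro p hp
      have hb : p.2 = b := by
        by_contra h
        simp [hslice, h] at hp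
      have hg : g p ≠ 0 := by
        intro h
        simp [hslice, h] at hp
      refine Finset.mem_image.2 ⟨p.1, hmemX p hg, ?_⟩
      exact Prod.ext rfl hb.symm)
    show prof2 (hslice g b) A A = _
    rw [this, Finset.sum_image (fun x hx y hy h => congrArg Prod.fst h)]
    refine Finset.sum_congr rfl fun x hx => ?_
    simp [hslice]
  have hs_supp : ∀ b : ℝ, s b ≠ 0 → b ∈ Y := by
    intro b hb
    by_contra h
    apply hb
    rw [hs_eq b]
    refine Finset.sum_eq_zero fun x hx => ?_
    have : g (x, b) = 0 := by
      by_contra hg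
      exact h (hmemY (x, b) hg)
    simp [this]
  have hs_nonneg : ∀ b : ℝ, 0 ≤ s b := by
    intro b
    rcases lt_or_ge b 0 with hb | hb
    · rw [hs_eq b]
      refine le_of_eq (Finset.sum_eq_zero fun x hx => ?_).symm
      rw [hmove.2 (x, b) (Or.inr hb)]
      ring
    · rw [hs_eq b]
      have hrow : ∀ x : ℝ, g (x, b) * pa x * pa b
          = ((a - 1) * ((x / (x + (a - 2))) * g (x, b))) * pa b := by
        intro x; rw [hpalin x]; ring
      simp_rw [hrow]
      rw [← Finset.sum_mul, ← Finset.mul_sum]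
      have hfin : ∑ x ∈ X, (x / (x + (a - 2))) * g (x, b)
          = ∑ᶠ x, (x / (x + (a - 2))) * g (x, b) := by
        refine (finsum_eq_sum_of_support_subset _ fun x hx => ?_).symm
        refine hmemX (x, b) fun hg => ?_
        simp only [Function.mem_support, hg, mul_zero] at hx
        exact hx rfl
      have hpos := (hval b).2.1 (a - 2) (by linarith)
      have : 0 ≤ ∑ x ∈ X, (x / (x + (a - 2))) * g (x, b) := by rw [hfin]; exact hpos
      have h1 : (0:ℝ) ≤ a - 1 := by linarith
      exact mul_nonneg (mul_nonneg h1 this) (hpan b hb)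
  -- total profile equals sum of slice profiles over Y
  have hXY : ∀ p : ℝ × ℝ, g p ≠ 0 → p ∈ X ×ˢ Y := by
    intro p hp
    rw [Finset.mem_product]
    exact ⟨hmemX p hp, hmemY p hp⟩
  have hT : prof2 g A A = ∑ b ∈ Y, s b := by
    rw [key g (X ×ˢ Y) hXY, Finset.sum_product]
    rw [Finset.sum_comm]
    exact Finset.sum_congr rfl fun b _ => (hs_eq b).symm
  -- the target profile
  have hG : prof2 (fun p => if |p.2 - 4| < r then g p else 0) A A
      = ∑ b ∈ Y.filter (fun b => |b - 4| < r), s b := by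
    rw [key (fun p => if |p.2 - 4| < r then g p else 0) (X ×ˢ Y) (by
      intro p hp
      refine hXY p fun hg => ?_
      simp [hg] at hp), Finset.sum_product, Finset.sum_comm, Finset.sum_filter]
    refine Finset.sum_congr rfl fun b _ => ?_
    by_cases hb : |b - 4| < r
    · simp only [hb, if_true, hs_eq b]
    · simp [hb]
  -- the hypothesis sum
  have hH : (2/3 : ℝ) ≤ ∑ b ∈ Y.filter (fun b => |b - a| < r), s b := by
    have h0 := hiso a ha3 ha5
    rw [← hA] at h0
    have heq : ∑ᶠ b ∈ {b : ℝ | |b - a| < r}, s b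
        = ∑ b ∈ Y.filter (fun b => |b - a| < r), s b := by
      rw [finsum_mem_def]
      rw [finsum_eq_sum_of_support_subset _ (s := Y.filter (fun b => |b - a| < r)) (by
        intro b hb
        have h1 : s b ≠ 0 := fun h => by
          simp only [Function.mem_support] at hb
          exact hb (by rw [Set.indicator_apply]; split <;> simp [h])
        have h2 : b ∈ {b : ℝ | |b - a| < r} := by
          by_contra h
          simp only [Function.mem_support, Set.indicator_of_notMem h] at hb
          exact hb rfl
        exact Finset.mem_filter.2 ⟨hs_supp b h1, h2⟩)]
      refine Finset.sum_congr rfl fun b hb => ?_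
      exact Set.indicator_of_mem (s := {b : ℝ | |b - a| < r}) (Finset.mem_filter.1 hb).2 s
    rw [← heq]
    exact h0
  -- total is 1
  have hTot : prof2 g A A = 1 := by
    set U : Finset (ℝ × ℝ) := S ∪ S.image Prod.swap with hUdef
    have hU1 : ∀ p, g p ≠ 0 → p ∈ U := fun p h => Finset.mem_union_left _ (hmemS p h)
    have hU2 : ∀ p : ℝ × ℝ, transpose g p ≠ 0 → p ∈ U := by
      intro p h
      refine Finset.mem_union_right _ (Finset.mem_image.2 ⟨(p.2, p.1), hmemS _ h, rfl⟩)
    have hU3 : ∀ p, tMove τ p ≠ 0 → p ∈ U := by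
      intro p h
      rw [← hsum p] at h
      rcases (by by_contra hc; push_neg at hc; rw [hc.1, hc.2] at h; simp at h :
        g p ≠ 0 ∨ transpose g p ≠ 0) with h' | h'
      · exact hU1 p h'
      · exact hU2 p h'
    have htrans : prof2 (transpose g) A A = prof2 g A A := by
      rw [key (transpose g) U hU2, key g U hU1]
      refine Finset.sum_nbij' (fun p => Prod.swap p) (fun p => Prod.swap p) ?_ ?_ ?_ ?_ ?_
      · intro p hp
        rcases Finset.mem_union.1 hp with h | h
        · exact Finset.mem_union_right _ (Finset.mem_image.2 ⟨p, h, rfl⟩)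
        · rcases Finset.mem_image.1 h with ⟨q, hq, hq2⟩
          refine Finset.mem_union_left _ ?_
          have hps : Prod.swap p ∈ S := by rw [← hq2, Prod.swap_swap]; exact hq
          simpa using hps
      · intro p hp
        rcases Finset.mem_union.1 hp with h | h
        · exact Finset.mem_union_right _ (Finset.mem_image.2 ⟨p, h, rfl⟩)
        · rcases Finset.mem_image.1 h with ⟨q, hq, hq2⟩
          refine Finset.mem_union_left _ ?_
          have hps : Prod.swap p ∈ S := by rw [← hq2, Prod.swap_swap]; exact hq
          simpa using hps
      · intro p _; exact Prod.swap_swap p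
      · intro p _; exact Prod.swap_swap p
      · intro p _
        simp only [transpose, Prod.swap]
        ring
    have htau : prof2 (tMove τ) A A = 2 := by
      have hne1 : ((1:ℝ), (1:ℝ)) ≠ ((2 - τ : ℝ), (0:ℝ)) := by
        intro h; have := congrArg Prod.snd h; norm_num at this
      have hne2 : ((1:ℝ), (1:ℝ)) ≠ ((0:ℝ), (2 - τ : ℝ)) := by
        intro h; have := congrArg Prod.fst h; norm_num at this
      have hne3 : ((2 - τ : ℝ), (0:ℝ)) ≠ ((0:ℝ), (2 - τ : ℝ)) := by
        intro h; have := congrArg Prod.fst h; simp only at this; linarith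
      rw [key (tMove τ) {((1:ℝ),(1:ℝ)), ((2-τ:ℝ),(0:ℝ)), ((0:ℝ),(2-τ:ℝ))} (by
        intro p hp
        simp only [tMove, pt] at hp
        simp only [Finset.mem_insert, Finset.mem_singleton]
        by_contra hc
        push_neg at hc
        rw [if_neg hc.1, if_neg hc.2.1, if_neg hc.2.2] at hp
        simp at hp)]
      rw [Finset.sum_insert (by
          simp only [Finset.mem_insert, Finset.mem_singleton]
          push_neg
          exact ⟨hne1, hne2⟩),
        Finset.sum_insert (by simp only [Finset.mem_singleton]; exact hne3)]
      rw [Finset.sum_singleton]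
      have e1 : tMove τ ((1:ℝ),(1:ℝ)) = 2 := by
        simp only [tMove, pt, if_pos rfl, if_neg hne1, if_neg hne2]; norm_num
      have e2 : tMove τ ((2-τ:ℝ),(0:ℝ)) = -1 := by
        simp only [tMove, pt, if_pos rfl, if_neg (Ne.symm hne1), if_neg hne3]; norm_num
      have e3 : tMove τ ((0:ℝ),(2-τ:ℝ)) = -1 := by
        simp only [tMove, pt, if_pos rfl, if_neg (Ne.symm hne2), if_neg (Ne.symm hne3)]; norm_num
      rw [e1, e2, e3]
      simp only [hpa0, hpa1]
      ring
    have hadd : prof2 g A A + prof2 (transpose g) A A = prof2 (tMove τ) A A := by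
      set U2 : Finset (ℝ × ℝ) := S ∪ S.image Prod.swap
      rw [key g U2 hU1, key (transpose g) U2 hU2, key (tMove τ) U2 hU3,
        ← Finset.sum_add_distrib]
      refine Finset.sum_congr rfl fun p _ => ?_
      rw [← hsum p]
      ring
    rw [htrans] at hadd
    linarith [hadd, htau ▸ hadd]
  -- disjointness and final bound
  have hdisj : Disjoint (Y.filter (fun b => |b - 4| < r)) (Y.filter (fun b => |b - a| < r)) := by
    rw [Finset.disjoint_left]
    intro b h1 h2
    have h1' := (Finset.mem_filter.1 h1).2
    have h2' := (Finset.mem_filter.1 h2).2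
    have : |a - 4| ≤ |a - b| + |b - 4| := by
      calc |a - 4| = |(a - b) + (b - 4)| := by ring_nf
        _ ≤ |a - b| + |b - 4| := abs_add_le _ _
    rw [abs_sub_comm a b] at this
    linarith
  have hsub : (Y.filter (fun b => |b - 4| < r)) ∪ (Y.filter (fun b => |b - a| < r)) ⊆ Y := by
    intro b hb
    rcases Finset.mem_union.1 hb with h | h
    · exact (Finset.mem_filter.1 h).1
    · exact (Finset.mem_filter.1 h).1
  have hle : ∑ b ∈ (Y.filter (fun b => |b - 4| < r)) ∪ (Y.filter (fun b => |b - a| < r)), s b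
      ≤ ∑ b ∈ Y, s b :=
    Finset.sum_le_sum_of_subset_of_nonneg hsub fun b _ _ => hs_nonneg b
  rw [Finset.sum_union hdisj] at hle
  rw [hG]
  rw [← hT, hTot] at hle
  linarith
end
end
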